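/- Let i, j, k be distinct indices, s_i, s_j, s_k ∈ {0,1}, and μ_{ab} = m_a − m_b for complex constants m_a. Define β_{ab}(λ) = (-1)^{s_a}/(λ_{ab} − μ_{ab}) where λ_{ab} = λ_a − λ_b. Then (-1)^{s_k} β_{kj}(λ) β_{ik}(λ) + (-1)^{s_j} β_{ij}(λ) β_{jk}(λ) = (-1)^{s_i} β_{ik}(λ) β_{ij}(λ) wherever all terms are defined. -/

import Mathlib

/- Writing `a = λ_ij − μ_ij` and `b = λ_jk − μ_jk`, the remaining denominators are
`λ_ik − μ_ik = a + b` and `λ_kj − μ_kj = -b`; each sign squares to `1`, so the identity is the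
partial-fraction decomposition `1 / (a b) = 1 / (a (a + b)) + 1 / (b (a + b))`. -/

theorem signed_partial_fraction {K : Type*} [Field K] {x y z a b : K}
    (hx : x * x = 1) (hy : y * y = 1) (hz : z * z = 1)
    (ha : a ≠ 0) (hb : b ≠ 0) (hab : a + b ≠ 0) :
    z * (z / -b) * (x / (a + b)) + y * (x / a) * (y / b) = x * (x / (a + b)) * (x / a) := by
  field_simp
  linear_combination -x * a * hz + x * (a + b) * hy - x * b * hx

theorem neg_one_pow_mul_self {R : Type*} [Monoid R] [HasDistribNeg R] (n : ℕ) :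
    (-1 : R) ^ n * (-1) ^ n = 1 :=
  pow_mul_pow_eq_one n (by rw [neg_one_mul, neg_neg])

theorem beta_three_term_identity_general {N : ℕ} (i j k : Fin N)
    (si sj sk : ZMod 2) (m : Fin N → ℂ)
    (βij βjk βik βkj : (Fin N → ℂ) → ℂ)
    (hβij : ∀ l : Fin N → ℂ, βij l = ((-1 : ℂ)) ^ si.val / (l i - l j - (m i - m j)))
    (hβjk : ∀ l : Fin N → ℂ, βjk l = ((-1 : ℂ)) ^ sj.val / (l j - l k - (m j - m k)))
    (hβik : ∀ l : Fin N → ℂ, βik l = ((-1 : ℂ)) ^ si.val / (l i - l k - (m i - m k)))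
    (hβkj : ∀ l : Fin N → ℂ, βkj l = ((-1 : ℂ)) ^ sk.val / (l k - l j - (m k - m j))) :
    ∀ l : Fin N → ℂ,
      l i - l j - (m i - m j) ≠ 0 →
      l j - l k - (m j - m k) ≠ 0 →
      l i - l k - (m i - m k) ≠ 0 →
      l k - l j - (m k - m j) ≠ 0 →
      ((-1 : ℂ)) ^ sk.val * βkj l * βik l + ((-1 : ℂ)) ^ sj.val * βij l * βjk l
        = ((-1 : ℂ)) ^ si.val * βik l * βij l := by
  intro l hij hjk hik _
  have hkj_eq : l k - l j - (m k - m j) = -(l j - l k - (m j - m k)) := by ring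
  have hik_eq :
      l i - l k - (m i - m k) = (l i - l j - (m i - m j)) + (l j - l k - (m j - m k)) := by
    ring
  rw [hik_eq] at hik
  rw [hβij, hβjk, hβik, hβkj, hkj_eq, hik_eq]
  exact signed_partial_fraction (neg_one_pow_mul_self _) (neg_one_pow_mul_self _)
    (neg_one_pow_mul_self _) hij hjk hik

/-- For distinct indices `i, j, k`, parities `s_i, s_j, s_k`, and constants
`μ_{ab} = m_a − m_b`, the functions `β_{ab}(λ) = (-1)^{s_a}/(λ_{ab} − μ_{ab})` satisfy
`(-1)^{s_k} β_{kj} β_{ik} + (-1)^{s_j} β_{ij} β_{jk} = (-1)^{s_i} β_{ik} β_{ij}`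
wherever all terms are defined. -/
theorem beta_three_term_identity {N : ℕ} (i j k : Fin N)
    (hij : i ≠ j) (hjk : j ≠ k) (hik : i ≠ k)
    (si sj sk : ZMod 2) (m : Fin N → ℂ)
    (βij βjk βik βkj : (Fin N → ℂ) → ℂ)
    (hβij : ∀ l : Fin N → ℂ, βij l = ((-1 : ℂ)) ^ si.val / (l i - l j - (m i - m j)))
    (hβjk : ∀ l : Fin N → ℂ, βjk l = ((-1 : ℂ)) ^ sj.val / (l j - l k - (m j - m k)))
    (hβik : ∀ l : Fin N → ℂ, βik l = ((-1 : ℂ)) ^ si.val / (l i - l k - (m i - m k)))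
    (hβkj : ∀ l : Fin N → ℂ, βkj l = ((-1 : ℂ)) ^ sk.val / (l k - l j - (m k - m j))) :
    ∀ l : Fin N → ℂ,
      l i - l j - (m i - m j) ≠ 0 →
      l j - l k - (m j - m k) ≠ 0 →
      l i - l k - (m i - m k) ≠ 0 →
      l k - l j - (m k - m j) ≠ 0 →
      ((-1 : ℂ)) ^ sk.val * βkj l * βik l + ((-1 : ℂ)) ^ sj.val * βij l * βjk l
        = ((-1 : ℂ)) ^ si.val * βik l * βij l :=
  beta_three_term_identity_general i j k si sj sk m βij βjk βik βkj hβij hβjk hβik hβkj
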